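/- arXiv:1309.5845 — 2 statements merged into one kernel-verified Lean document; each statement's English description precedes it below -/
import Mathlib

section
/- For every real t, the product Δ₆(1/2 + it)·D(1/2 + it) is real, i.e. Im(Δ₆(1/2 + it)·D(1/2 + it)) = 0. (Equivalently, on the critical line the phase of Δ₆ is, modulo π, determined by the phase of D.) -/
/-!
Λ commutes with complex conjugation: on `0 < re s` because `Λ = Γℝ · ζ` and both factors do,
elsewhere by the functional equation. Hence `Λ (1 - conj s) = conj (Λ s)`. For `s = 1/2 + it`
this gives `Λ (2s - 1) = conj (Λ (2s))` and makes `Λ (2s - 1/2)` real, so the numerator and the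
`Λ`-factor of the denominator of `Δ₆ s` are real; multiplying by `D s` cancels the remaining
factor (or gives `0` when `D s = 0`).
-/

noncomputable def D (s : ℂ) : ℂ :=
  ((Real.pi ^ (-(1/4) : ℝ) : ℝ) * Complex.Gamma s +
    (Real.pi ^ ((1/4) : ℝ) : ℝ) * Complex.Gamma (s - 1/2)) / Complex.Gamma (s - 1/4)

noncomputable def Δ₆ (s : ℂ) : ℂ :=
  (completedRiemannZeta (2 * s) + completedRiemannZeta (2 * s - 1)) /
    (completedRiemannZeta (2 * s - 1/2) * D s)

open Complex ComplexConjugate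

lemma Complex.Gammaℝ_conj (s : ℂ) : Gammaℝ (conj s) = conj (Gammaℝ s) := by
  have hπ : (Real.pi : ℂ).arg ≠ Real.pi := by
    rw [arg_ofReal_of_nonneg Real.pi_pos.le]; exact Real.pi_pos.ne
  have hexp : -conj s / 2 = conj (-s / 2) := by rw [map_div₀, map_neg, map_ofNat]
  rw [Gammaℝ, Gammaℝ, map_mul, ← Gamma_conj, hexp, cpow_conj _ _ hπ, conj_ofReal, map_div₀,
    map_ofNat]

lemma completedRiemannZeta_eq_Gammaℝ_mul_riemannZeta {s : ℂ} (hs : 0 < s.re) :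
    completedRiemannZeta s = Gammaℝ s * riemannZeta s := by
  rw [riemannZeta_def_of_ne_zero (ne_of_apply_ne re hs.ne'),
    mul_div_cancel₀ _ (Gammaℝ_ne_zero_of_re_pos hs)]

lemma completedRiemannZeta_conj_of_re_pos {s : ℂ} (hs : 0 < s.re) :
    completedRiemannZeta (conj s) = conj (completedRiemannZeta s) := by
  have hs' : 0 < (conj s).re := by rwa [conj_re]
  rw [completedRiemannZeta_eq_Gammaℝ_mul_riemannZeta hs',
    completedRiemannZeta_eq_Gammaℝ_mul_riemannZeta hs, map_mul, Gammaℝ_conj, riemannZeta_conj]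

lemma completedRiemannZeta_conj (s : ℂ) :
    completedRiemannZeta (conj s) = conj (completedRiemannZeta s) := by
  rcases lt_or_ge 0 s.re with hs | hs
  · exact completedRiemannZeta_conj_of_re_pos hs
  · have h1s : 0 < (1 - s).re := by rw [sub_re, one_re]; linarith
    rw [← completedRiemannZeta_one_sub, ← completedRiemannZeta_one_sub s,
      ← map_one (starRingEnd ℂ), ← map_sub, completedRiemannZeta_conj_of_re_pos h1s, map_one]

lemma completedRiemannZeta_one_sub_conj (s : ℂ) :
    completedRiemannZeta (1 - conj s) = conj (completedRiemannZeta s) := by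
  rw [completedRiemannZeta_one_sub, completedRiemannZeta_conj]

lemma conj_completedRiemannZeta_add_one_sub_conj (s : ℂ) :
    conj (completedRiemannZeta s + completedRiemannZeta (1 - conj s)) =
      completedRiemannZeta s + completedRiemannZeta (1 - conj s) := by
  rw [map_add, completedRiemannZeta_one_sub_conj, conj_conj, add_comm]

lemma conj_completedRiemannZeta_half_add_mul_I (t : ℝ) :
    conj (completedRiemannZeta (1 / 2 + t * I)) = completedRiemannZeta (1 / 2 + t * I) := by
  have h : 1 - conj (1 / 2 + t * I) = 1 / 2 + t * I := by
    simp only [map_add, map_div₀, map_one, map_ofNat, map_mul, conj_ofReal, conj_I]; ring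
  rw [← completedRiemannZeta_one_sub_conj, h]

lemma Complex.conj_div_mul_mul_right_eq_self {a b : ℂ} (ha : conj a = a) (hb : conj b = b)
    (c : ℂ) : conj (a / (b * c) * c) = a / (b * c) * c := by
  rcases eq_or_ne c 0 with rfl | hc
  · simp
  · rw [div_mul_eq_mul_div, mul_div_mul_right _ _ hc, map_div₀, ha, hb]

theorem Delta6_times_D_real_on_critical_line (t : ℝ) :
    (Δ₆ (1/2 + t * Complex.I) * D (1/2 + t * Complex.I)).im = 0 := by
  set s : ℂ := 1/2 + t * I
  have hnum : 2 * s - 1 = 1 - conj (2 * s) := by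
    simp only [s, map_mul, map_add, map_div₀, map_one, map_ofNat, conj_ofReal, conj_I]; ring
  have hden : 2 * s - 1/2 = 1/2 + ((2 * t : ℝ) : ℂ) * I := by push_cast [s]; ring
  rw [← conj_eq_iff_im, Δ₆, hnum, hden]
  exact conj_div_mul_mul_right_eq_self (conj_completedRiemannZeta_add_one_sub_conj _)
    (conj_completedRiemannZeta_half_add_mul_I _) _
end

section
/- The function Δ₆ has a first-order pole at s = 1: ‖Δ₆(s)‖ tends to +∞ as s → 1 within ℂ \ {1} (the punctured neighbourhood filter 𝓝[≠] 1), and there exists a nonzero complex constant c such that (s−1)·Δ₆(s) tends to c as s → 1 within ℂ \ {1}. -/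
open Filter

/-!
Near `s = 1` only `Λ(2s - 1)` is singular, with residue `1/2` (that of `Λ` at `1`, halved by the
substitution), while `Λ(2s)`, `Λ(2s - 1/2)` and `D` are holomorphic there. The denominator
`Λ(3/2) · D(1)` is nonzero because `ζ` does not vanish on `re s > 1` and `D` is positive on the
real half-line `s > 1/2`, so `(s - 1) Δ₆(s) → (1/2) / (Λ(3/2) · D(1)) ≠ 0`.
-/

open Complex Topology

theorem tendsto_norm_atTop_of_tendsto_sub_mul {𝕜 : Type*} [NormedField 𝕜] {f : 𝕜 → 𝕜}
    {a c : 𝕜} (hc : c ≠ 0) (h : Tendsto (fun s => (s - a) * f s) (𝓝[≠] a) (𝓝 c)) :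
    Tendsto (fun s => ‖f s‖) (𝓝[≠] a) atTop := by
  have hinv : Tendsto (fun s => ‖s - a‖⁻¹) (𝓝[≠] a) atTop :=
    (tendsto_norm_sub_self_nhdsNE a).inv_tendsto_nhdsGT_zero
  refine (hinv.atTop_mul_pos (norm_pos_iff.mpr hc) h.norm).congr' ?_
  filter_upwards [self_mem_nhdsWithin] with s hs
  rw [norm_mul, inv_mul_cancel_left₀ (norm_ne_zero_iff.mpr (sub_ne_zero.mpr hs))]

theorem completedRiemannZeta_ne_zero_of_one_lt_re {s : ℂ} (hs : 1 < s.re) :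
    completedRiemannZeta s ≠ 0 := by
  have hζ := riemannZeta_ne_zero_of_one_lt_re hs
  rw [riemannZeta_def_of_ne_zero (by rintro rfl; norm_num at hs)] at hζ
  exact fun h => hζ (by rw [h, zero_div])

theorem Filter.Tendsto.completedRiemannZeta {α : Type*} {l : Filter α} {g : α → ℂ} {b : ℂ}
    (hg : Tendsto g l (𝓝 b)) (hb₀ : b ≠ 0) (hb₁ : b ≠ 1) :
    Tendsto (fun x => completedRiemannZeta (g x)) l (𝓝 (completedRiemannZeta b)) :=
  (differentiableAt_completedZeta hb₀ hb₁).continuousAt.tendsto.comp hg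

theorem tendsto_sub_one_mul_completedRiemannZeta_two_mul_sub_one :
    Tendsto (fun s : ℂ => (s - 1) * completedRiemannZeta (2 * s - 1)) (𝓝[≠] 1) (𝓝 (1 / 2)) := by
  have hmap : Tendsto (fun s : ℂ => 2 * s - 1) (𝓝[≠] 1) (𝓝[≠] 1) := by
    refine tendsto_nhdsWithin_of_tendsto_nhds_of_eventually_within _ ?_ ?_
    · exact ((by fun_prop : Continuous fun s : ℂ => 2 * s - 1).tendsto' 1 1 (by norm_num)).mono_left
        nhdsWithin_le_nhds
    · filter_upwards [self_mem_nhdsWithin] with s (hs : s ≠ 1) (h : 2 * s - 1 = 1)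
      exact hs (by linear_combination h / 2)
  have := (completedRiemannZeta_residue_one.comp hmap).const_mul (1 / 2)
  rw [mul_one] at this
  exact this.congr fun s => by simp only [Function.comp_apply]; ring

theorem tendsto_sub_one_mul_completedRiemannZeta_two_mul_add_two_mul_sub_one :
    Tendsto (fun s : ℂ => (s - 1) * (completedRiemannZeta (2 * s) +
      completedRiemannZeta (2 * s - 1))) (𝓝[≠] 1) (𝓝 (1 / 2)) := by
  have hzero := ((continuous_sub_right (1 : ℂ)).tendsto' 1 0 (sub_self 1)).mul
    (((continuous_const_mul (2 : ℂ)).tendsto' 1 2 (mul_one 2)).completedRiemannZeta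
      two_ne_zero (by norm_num))
  rw [zero_mul] at hzero
  have := (hzero.mono_left nhdsWithin_le_nhds).add
    tendsto_sub_one_mul_completedRiemannZeta_two_mul_sub_one
  rw [zero_add] at this
  exact this.congr fun s => (mul_add _ _ _).symm

theorem Complex.differentiableAt_Gamma_of_re_pos {s : ℂ} (hs : 0 < s.re) :
    DifferentiableAt ℂ Gamma s := by
  refine differentiableAt_Gamma s fun m hm => ?_
  rw [hm, neg_re, natCast_re, Left.neg_pos_iff] at hs
  exact hs.not_ge m.cast_nonneg

theorem differentiableAt_D {s : ℂ} (hs : 1 / 2 < s.re) : DifferentiableAt ℂ D s := by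
  have hΓ (a : ℂ) (ha : a.re < s.re) : DifferentiableAt ℂ (fun s => Gamma (s - a)) s :=
    (differentiableAt_Gamma_of_re_pos (by rw [sub_re]; linarith)).comp s (by fun_prop)
  have h₁ : 0 < (s - 1 / 4).re := by norm_num; linarith
  unfold D
  refine .div (.add (.const_mul ?_ _) (.const_mul ?_ _)) ?_ (Gamma_ne_zero_of_re_pos h₁)
  · simpa using hΓ 0 (by rw [zero_re]; linarith)
  · exact hΓ (1 / 2) (by norm_num; linarith)
  · exact hΓ (1 / 4) (by norm_num; linarith)

theorem D_ofReal_ne_zero {x : ℝ} (hx : 1 / 2 < x) : D x ≠ 0 := by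
  have hD : D x = ((Real.pi ^ (-(1/4) : ℝ) * Real.Gamma x +
      Real.pi ^ (1/4 : ℝ) * Real.Gamma (x - 1/2)) / Real.Gamma (x - 1/4) : ℝ) := by
    push_cast [D, ← Complex.Gamma_ofReal]
    rfl
  have hΓ {a : ℝ} (ha : a < x) : 0 < Real.Gamma (x - a) := Real.Gamma_pos_of_pos (by linarith)
  have hΓ₀ : 0 < Real.Gamma x := by simpa using hΓ (a := 0) (by linarith)
  have hΓ₁ := hΓ (a := 1 / 2) hx
  have hΓ₂ := hΓ (a := 1 / 4) (by linarith)
  rw [hD, ofReal_ne_zero]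
  positivity

theorem Delta6_pole_at_one :
    Tendsto (fun s : ℂ => ‖Δ₆ s‖) (nhdsWithin 1 {(1 : ℂ)}ᶜ) atTop ∧
    ∃ c : ℂ, c ≠ 0 ∧
      Tendsto (fun s : ℂ => (s - 1) * Δ₆ s) (nhdsWithin 1 {(1 : ℂ)}ᶜ) (nhds c) := by
  have hden : Tendsto (fun s : ℂ => completedRiemannZeta (2 * s - 1 / 2) * D s) (𝓝[≠] 1)
      (𝓝 (completedRiemannZeta (3 / 2) * D 1)) := by
    have hΛ := ((by fun_prop : Continuous fun s : ℂ => 2 * s - 1 / 2).tendsto' 1 (3 / 2)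
      (by norm_num)).completedRiemannZeta (by norm_num) (by norm_num)
    exact (hΛ.mul (differentiableAt_D (by norm_num)).continuousAt.tendsto).mono_left
      nhdsWithin_le_nhds
  have hden_ne : completedRiemannZeta (3 / 2) * D 1 ≠ 0 :=
    mul_ne_zero (completedRiemannZeta_ne_zero_of_one_lt_re (by norm_num))
      (by simpa using D_ofReal_ne_zero (x := 1) (by norm_num))
  set c := 1 / 2 / (completedRiemannZeta (3 / 2) * D 1)
  have hres : Tendsto (fun s : ℂ => (s - 1) * Δ₆ s) (𝓝[≠] 1) (𝓝 c) :=
    (tendsto_sub_one_mul_completedRiemannZeta_two_mul_add_two_mul_sub_one.div hden hden_ne).congr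
      fun s => by rw [Pi.div_apply, Δ₆, mul_div_assoc]
  have hc : c ≠ 0 := div_ne_zero (by norm_num) hden_ne
  exact ⟨tendsto_norm_atTop_of_tendsto_sub_mul hc hres, c, hc, hres⟩
end
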